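/- arXiv:2504.18526 — 3 statements merged into one kernel-verified Lean document; each statement's English description precedes it below -/
import Mathlib

section
/- Let L ≥ 1, let U₁,…,U_L be types and V₁,…,V_L be additive commutative groups, and let F_l : U_l → V_l, P_l : U_{l+1} → U_l, and additive maps R_l : V_{l+1} → V_l be given for the appropriate indices. Given a family of approximations u_l ∈ U_l (l = 1,…,L), define the FAS right-hand sides top-down by g_L = 0 and g_l = F_l(P_l u_{l+1}) + R_l(g_{l+1} − F_{l+1}(u_{l+1})) for l < L. Suppose the residuals vanish on every level: g_l − F_l(u_l) = 0 for all l = 1,…,L. Then F_L(u_L) = 0, and F_l(u_l) = F_l(P_l u_{l+1}) for every l = 1,…,L−1; that is, the family (u_1,…,u_L) satisfies the incremental multilevel collocation equations. -/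
universe u w

/-- If all FAS level residuals `g_l − F_l(u_l)` vanish, where the FAS right-hand sides are
defined top-down by `g_L = 0` and `g_l = F_l(P_l u_{l+1}) + R_l(g_{l+1} − F_{l+1}(u_{l+1}))`,
then the family `(u_1,…,u_L)` satisfies the incremental multilevel collocation equations. -/
theorem fas_convergence_implies_ml_collocation
    (L : ℕ) (hL : 1 ≤ L) (U : ℕ → Type u) (V : ℕ → Type w)
    [∀ l, AddCommGroup (V l)]
    (F : ∀ l, U l → V l) (P : ∀ l, U (l + 1) → U l) (R : ∀ l, V (l + 1) →+ V l)
    (u : ∀ l, U l) (g : ∀ l, V l)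
    (hgL : g L = 0)
    (hg : ∀ l, l < L →
      g l = F l (P l (u (l + 1))) + R l (g (l + 1) - F (l + 1) (u (l + 1))))
    (hres : ∀ l, 1 ≤ l → l ≤ L → g l - F l (u l) = 0) :
    F L (u L) = 0 ∧ ∀ l, 1 ≤ l → l < L → F l (u l) = F l (P l (u (l + 1))) := by
  have hFg : ∀ l, 1 ≤ l → l ≤ L → F l (u l) = g l := fun l h1 h2 =>
    (sub_eq_zero.mp (hres l h1 h2)).symm
  refine ⟨(hFg L hL le_rfl).trans hgL, fun l h1 h2 => ?_⟩
  have hcorrection : R l (g (l + 1) - F (l + 1) (u (l + 1))) = 0 := by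
    rw [hres (l + 1) (Nat.le_add_left 1 l) h2, map_zero]
  rw [hFg l h1 h2.le, hg l h2, hcorrection, add_zero]
end

section
/- Let E be a real vector space, M₁, M₂ ∈ ℕ, and let R be an M₁×M₂ real matrix acting on E-valued tuples by (R·x)_m = ∑_{i=1}^{M₂} R_{m,i} • x_i. Let C₂ : E^{M₂} → E^{M₂} and C₁ : E^{M₁} → E^{M₁} denote the partial-sum operators (Cx)_m = ∑_{j=1}^{m} x_j. Let U, U_c be types, F : U → E^{M₂}, F_c : U_c → E^{M₁} and P : U → U_c be maps, and define the FAS right-hand sides g^{nn}(u) = F_c(P u) − R·F(u) and g^{0n}(u) = C₁ F_c(P u) − R·(C₂ F(u)). If g^{0n}(u) = C₁ g^{nn}(u) for every u ∈ U, then R·(C₂ F(u)) = C₁ (R·F(u)) for every u ∈ U; i.e., the commutation relation R C₂ = C₁ R must hold on the range of the fine residual map F. -/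
/-- If the non-incremental two-level FAS right-hand side satisfies `g^{0n} = C₁ g^{nn}`
for all fine-level approximations, then the restriction matrix commutes with the
partial-sum operators on the range of the fine residual map: `R C₂ F = C₁ R F`. -/
theorem mlsdc_equivalence_needs_commutation {E : Type*} [AddCommGroup E] [Module ℝ E]
    (M₁ M₂ : ℕ) (R : Matrix (Fin M₁) (Fin M₂) ℝ) {U U_c : Type*}
    (F : U → (Fin M₂ → E)) (Fc : U_c → (Fin M₁ → E)) (P : U → U_c) :
    let Rop : (Fin M₂ → E) → (Fin M₁ → E) := fun x m => ∑ i, R m i • x i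
    let C₁ : (Fin M₁ → E) → (Fin M₁ → E) := fun x m =>
      ∑ j ∈ Finset.univ.filter (fun j => j ≤ m), x j
    let C₂ : (Fin M₂ → E) → (Fin M₂ → E) := fun x m =>
      ∑ j ∈ Finset.univ.filter (fun j => j ≤ m), x j
    let gnn : U → Fin M₁ → E := fun u => Fc (P u) - Rop (F u)
    let g0n : U → Fin M₁ → E := fun u => C₁ (Fc (P u)) - Rop (C₂ (F u))
    (∀ u : U, g0n u = C₁ (gnn u)) →
      ∀ u : U, Rop (C₂ (F u)) = C₁ (Rop (F u)) := by
  intro Rop C₁ C₂ gnn g0n h u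
  have hC₁ : C₁ (Fc (P u) - Rop (F u)) = C₁ (Fc (P u)) - C₁ (Rop (F u)) := by
    funext m
    simp only [C₁, Pi.sub_apply]
    exact Finset.sum_sub_distrib _ _
  have h' := h u
  simp only [g0n, gnn, hC₁] at h'
  have := sub_right_injective h'
  exact this.symm ▸ rfl
end

section
/- Let the coarse nodes be τ₁ = 1/2, τ₂ = 1 and the fine nodes σ₁ = 1/3, σ₂ = 2/3, σ₃ = 1. Let ℓ₁(t) = (t − 1)/(1/2 − 1) and ℓ₂(t) = (t − 1/2)/(1 − 1/2) be the Lagrange basis polynomials at the coarse nodes, and define the 3×2 interpolation matrix I by I_{m,j} = ℓ_j(σ_m), so that I = [[4/3, −1/3], [2/3, 1/3], [0, 1]]. Let R = Iᵗ be the 2×3 restriction matrix, and let C₃ and C₂ be the 3×3 and 2×2 lower-triangular matrices of ones. Then R·C₃ ≠ C₂·R. In particular, the commutation condition R C^{0n}_{l+1} = C^{0n}_l R, which is necessary for the equivalence of the incremental and non-incremental MLSDC formulations, fails; hence the incremental and non-incremental MLSDC formulations are not equivalent. -/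
/- The `(0,0)` entry of `R C₃` is the whole first-row sum of `R`, while that of `C₂ R` is `R₀₀`;
for the Lagrange restriction the rest of the first row, `ℓ₁(2/3) + ℓ₁(1) = 2/3`, is not zero. -/

theorem Matrix.mul_lowerOnes_ne_lowerOnes_mul_of_add_ne_zero {α : Type*} [NonAssocRing α]
    (R : Matrix (Fin 2) (Fin 3) α) (h : R 0 1 + R 0 2 ≠ 0) :
    R * (!![1, 0, 0; 1, 1, 0; 1, 1, 1] : Matrix (Fin 3) (Fin 3) α) ≠
      (!![1, 0; 1, 1] : Matrix (Fin 2) (Fin 2) α) * R := by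
  intro hcomm
  have hentry := congrFun (congrFun hcomm 0) 0
  exact h (by simpa [Matrix.mul_apply, Fin.sum_univ_succ] using hentry)

/-- For coarse nodes `(1/2, 1)` and fine nodes `(1/3, 2/3, 1)`, the Lagrange interpolation
matrix is `I = [[4/3, −1/3], [2/3, 1/3], [0, 1]]`, and with `R = Iᵗ` the commutation
condition `R C₃ = C₂ R` fails: the incremental and non-incremental MLSDC formulations
are not equivalent. -/
theorem mlsdc_commutation_fails :
    let σ : Fin 3 → ℝ := ![1/3, 2/3, 1]
    let ℓ : Fin 2 → ℝ → ℝ :=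
      ![fun t => (t - 1) / (1/2 - 1), fun t => (t - 1/2) / (1 - 1/2)]
    let I : Matrix (Fin 3) (Fin 2) ℝ := Matrix.of fun m j => ℓ j (σ m)
    let R : Matrix (Fin 2) (Fin 3) ℝ := I.transpose
    let C₃ : Matrix (Fin 3) (Fin 3) ℝ := !![1, 0, 0; 1, 1, 0; 1, 1, 1]
    let C₂ : Matrix (Fin 2) (Fin 2) ℝ := !![1, 0; 1, 1]
    I = !![4/3, -1/3; 2/3, 1/3; 0, 1] ∧ R * C₃ ≠ C₂ * R := by
  intro σ ℓ I R C₃ C₂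
  have hI : I = !![4/3, -1/3; 2/3, 1/3; 0, 1] := by
    ext m j
    fin_cases m <;> fin_cases j <;> norm_num [I, ℓ, σ]
  refine ⟨hI, R.mul_lowerOnes_ne_lowerOnes_mul_of_add_ne_zero ?_⟩
  norm_num [R, hI, Matrix.cons_val_two]
end
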